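/- arXiv:2208.13615 — 3 statements merged into one kernel-verified Lean document; each statement's English description precedes it below -/
import Mathlib

section
/- For every integer ℓ ≥ 1 and every Boolean b, the double ladder of length ℓ admits a 2-page book embedding whose spine order is as follows: first s1 and s2 (in some order); then, for i = 0, 1, …, ℓ in increasing order of i, the three vertices u_i, v_i, w_i occupying three consecutive positions, ordered w_i < v_i < u_i for even i and u_i < v_i < w_i for odd i if b = true, and ordered u_i < v_i < w_i for even i and w_i < v_i < u_i for odd i if b = false; finally t1 and t2 (in some order). -/
/-- A 2-page book embedding of the DAG on vertex type `V` with edge relation `E`: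
a spine position function (an injective topological order) together with an
assignment of edges to two pages such that no two same-page edges cross. -/
structure TwoPageEmbedding (V : Type*) (E : V → V → Prop) where
  pos : V → ℕ
  pos_inj : Function.Injective pos
  topo : ∀ ⦃a b : V⦄, E a b → pos a < pos b
  page : V → V → Bool
  no_cross : ∀ a b c d : V, E a b → E c d → page a b = page c d →
    ¬ (pos a < pos c ∧ pos c < pos b ∧ pos b < pos d)

/-- `a` and `b` occupy consecutive spine positions, with `a` before `b`. -/
def TwoPageEmbedding.Consec {V : Type*} {E : V → V → Prop}
    (emb : TwoPageEmbedding V E) (a b : V) : Prop :=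
  emb.pos a < emb.pos b ∧
    ∀ x : V, ¬ (emb.pos a < emb.pos x ∧ emb.pos x < emb.pos b)

/-- `a` and `b` are spine-consecutive: no vertex lies strictly between them. -/
def TwoPageEmbedding.SpineConsec {V : Type*} {E : V → V → Prop}
    (emb : TwoPageEmbedding V E) (a b : V) : Prop :=
  (∀ x : V, ¬ (emb.pos a < emb.pos x ∧ emb.pos x < emb.pos b)) ∧
  (∀ x : V, ¬ (emb.pos b < emb.pos x ∧ emb.pos x < emb.pos a))

/-- Names of the vertices of a double ladder. -/
inductive DLV : Type
  | s1 | s2 | t1 | t2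
  | u (i : ℕ) | v (i : ℕ) | w (i : ℕ)

/-- Validity of a vertex name for the double ladder of length `ℓ`. -/
def DLV.valid (ℓ : ℕ) : DLV → Prop
  | .u i => i ≤ ℓ
  | .v i => i ≤ ℓ
  | .w i => i ≤ ℓ
  | _ => True

/-- The vertex set of the double ladder of length `ℓ`. -/
def DLVert (ℓ : ℕ) : Type := {x : DLV // DLV.valid ℓ x}

def DLs1 (ℓ : ℕ) : DLVert ℓ := ⟨DLV.s1, trivial⟩
def DLs2 (ℓ : ℕ) : DLVert ℓ := ⟨DLV.s2, trivial⟩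
def DLt1 (ℓ : ℕ) : DLVert ℓ := ⟨DLV.t1, trivial⟩
def DLt2 (ℓ : ℕ) : DLVert ℓ := ⟨DLV.t2, trivial⟩
def DLu (ℓ i : ℕ) (h : i ≤ ℓ) : DLVert ℓ := ⟨DLV.u i, h⟩
def DLv (ℓ i : ℕ) (h : i ≤ ℓ) : DLVert ℓ := ⟨DLV.v i, h⟩
def DLw (ℓ i : ℕ) (h : i ≤ ℓ) : DLVert ℓ := ⟨DLV.w i, h⟩

/-- The edges of the double ladder of length `ℓ` (on vertex names). -/
inductive DLEdgeV (ℓ : ℕ) : DLV → DLV → Prop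
  | s1u : DLEdgeV ℓ .s1 (.u 0)
  | s1v : DLEdgeV ℓ .s1 (.v 0)
  | s2v : DLEdgeV ℓ .s2 (.v 0)
  | s2w : DLEdgeV ℓ .s2 (.w 0)
  | ut1 : DLEdgeV ℓ (.u ℓ) .t1
  | vt1 : DLEdgeV ℓ (.v ℓ) .t1
  | vt2 : DLEdgeV ℓ (.v ℓ) .t2
  | wt2 : DLEdgeV ℓ (.w ℓ) .t2
  | uu {i : ℕ} : i < ℓ → DLEdgeV ℓ (.u i) (.u (i + 1))
  | vu {i : ℕ} : i < ℓ → DLEdgeV ℓ (.v i) (.u (i + 1))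
  | vv {i : ℕ} : i < ℓ → DLEdgeV ℓ (.v i) (.v (i + 1))
  | wv {i : ℕ} : i < ℓ → DLEdgeV ℓ (.w i) (.v (i + 1))
  | ww {i : ℕ} : i < ℓ → DLEdgeV ℓ (.w i) (.w (i + 1))

/-- The edge relation of the double ladder of length `ℓ`. -/
def DLEdge (ℓ : ℕ) (a b : DLVert ℓ) : Prop := DLEdgeV ℓ a.val b.val

/-- Every vertex of the `i`-th triple precedes every vertex of the `j`-th triple
in the spine order of `emb`. -/
def TripleBefore {ℓ : ℕ} (emb : TwoPageEmbedding (DLVert ℓ) (DLEdge ℓ))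
    (i j : ℕ) : Prop :=
  ∀ x y : DLVert ℓ,
    (x.val = DLV.u i ∨ x.val = DLV.v i ∨ x.val = DLV.w i) →
    (y.val = DLV.u j ∨ y.val = DLV.v j ∨ y.val = DLV.w j) →
    emb.pos x < emb.pos y

/-- The first vertex of the `i`-th triple in the spine pattern determined by `b`:
`w i` when `(i` is even`) = b`, and `u i` otherwise. -/
def DLlo (ℓ : ℕ) (b : Bool) (i : ℕ) (h : i ≤ ℓ) : DLVert ℓ :=
  if (i % 2 == 0) = b then DLw ℓ i h else DLu ℓ i h

/-- The last vertex of the `i`-th triple in the spine pattern determined by `b`: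
`u i` when `(i` is even`) = b`, and `w i` otherwise. -/
def DLhi (ℓ : ℕ) (b : Bool) (i : ℕ) (h : i ≤ ℓ) : DLVert ℓ :=
  if (i % 2 == 0) = b then DLu ℓ i h else DLw ℓ i h

-- auxiliary definitions: spine position (c = 0 for pattern b = true, c = 1 for b = false)
def DLposV (ℓ c : ℕ) : DLV → ℕ
  | .s1 => c
  | .s2 => 1 - c
  | .t1 => 3*ℓ+5 + (ℓ + c) % 2
  | .t2 => 3*ℓ+6 - (ℓ + c) % 2
  | .u i => 3*i + 4 - 2*((i + c) % 2)
  | .v i => 3*i + 3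
  | .w i => 3*i + 2 + 2*((i + c) % 2)

def DLpageV (c : ℕ) : DLV → Bool
  | .u i => decide ((i + c) % 2 = 0)
  | .v i => decide ((i + c) % 2 = 0)
  | .w i => decide ((i + c) % 2 = 0)
  | .s1 => decide ((1 + c) % 2 = 0)
  | .s2 => decide ((1 + c) % 2 = 0)
  | _ => false

lemma false_eq_decide_iff' (p : Prop) [Decidable p] : (false = decide p) ↔ ¬ p := by
  simp [eq_comm]

lemma DLposV_inj (ℓ c : ℕ) (hc : c ≤ 1) :
    Function.Injective (fun x : DLVert ℓ => DLposV ℓ c x.val) := by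
  have hl := Nat.mod_two_eq_zero_or_one (ℓ + c)
  rintro ⟨x, hx⟩ ⟨y, hy⟩ h
  apply Subtype.ext
  simp only at h ⊢
  cases x <;> cases y <;>
    simp only [DLV.valid] at hx hy <;>
    simp only [DLposV, DLV.u.injEq, DLV.v.injEq, DLV.w.injEq, reduceCtorEq] at h ⊢ <;>
    (first
    | omega
    | (rename_i i _ j _
       have := Nat.mod_two_eq_zero_or_one (i + c)
       have := Nat.mod_two_eq_zero_or_one (i + 1 + c)
       have := Nat.mod_two_eq_zero_or_one (j + c)
       have := Nat.mod_two_eq_zero_or_one (j + 1 + c)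
       omega)
    | (rename_i i j
       have := Nat.mod_two_eq_zero_or_one (i + c)
       have := Nat.mod_two_eq_zero_or_one (i + 1 + c)
       have := Nat.mod_two_eq_zero_or_one (j + c)
       have := Nat.mod_two_eq_zero_or_one (j + 1 + c)
       omega)
    | (rename_i j _
       have := Nat.mod_two_eq_zero_or_one (j + c)
       have := Nat.mod_two_eq_zero_or_one (j + 1 + c)
       omega)
    | (rename_i j
       have := Nat.mod_two_eq_zero_or_one (j + c)
       have := Nat.mod_two_eq_zero_or_one (j + 1 + c)
       omega))

lemma DLposV_topo (ℓ c : ℕ) (hc : c ≤ 1) ⦃a b : DLVert ℓ⦄ (h : DLEdge ℓ a b) :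
    DLposV ℓ c a.val < DLposV ℓ c b.val := by
  have hl := Nat.mod_two_eq_zero_or_one (ℓ + c)
  obtain ⟨a, ha⟩ := a; obtain ⟨b2, hb⟩ := b
  simp only [DLEdge] at h
  cases h <;> simp only [DLposV] <;>
    (first
    | omega
    | (rename_i i _ j _
       have := Nat.mod_two_eq_zero_or_one (i + c)
       have := Nat.mod_two_eq_zero_or_one (i + 1 + c)
       have := Nat.mod_two_eq_zero_or_one (j + c)
       have := Nat.mod_two_eq_zero_or_one (j + 1 + c)
       omega)
    | (rename_i i j
       have := Nat.mod_two_eq_zero_or_one (i + c)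
       have := Nat.mod_two_eq_zero_or_one (i + 1 + c)
       have := Nat.mod_two_eq_zero_or_one (j + c)
       have := Nat.mod_two_eq_zero_or_one (j + 1 + c)
       omega)
    | (rename_i j _
       have := Nat.mod_two_eq_zero_or_one (j + c)
       have := Nat.mod_two_eq_zero_or_one (j + 1 + c)
       omega)
    | (rename_i j
       have := Nat.mod_two_eq_zero_or_one (j + c)
       have := Nat.mod_two_eq_zero_or_one (j + 1 + c)
       omega))

set_option maxHeartbeats 1000000 in
lemma DL_no_cross (ℓ c : ℕ) (hℓ : 1 ≤ ℓ) (hc : c ≤ 1) :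
    ∀ a b2 c2 d : DLVert ℓ, DLEdge ℓ a b2 → DLEdge ℓ c2 d →
      DLpageV c a.val = DLpageV c c2.val →
      ¬ (DLposV ℓ c a.val < DLposV ℓ c c2.val ∧ DLposV ℓ c c2.val < DLposV ℓ c b2.val ∧
         DLposV ℓ c b2.val < DLposV ℓ c d.val) := by
  have hl := Nat.mod_two_eq_zero_or_one (ℓ + c)
  have hl1 := Nat.mod_two_eq_zero_or_one (ℓ + 1 + c)
  have hs := Nat.mod_two_eq_zero_or_one (1 + c)
  rintro ⟨a, ha⟩ ⟨b2, hb⟩ ⟨c2, hc2⟩ ⟨d, hd⟩ h1 h2 hp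
  simp only [DLEdge] at h1 h2
  cases h1 <;> cases h2 <;>
    simp only [DLposV, DLpageV, decide_eq_decide, decide_eq_true_eq,
      decide_eq_false_iff_not, false_eq_decide_iff'] at hp ⊢ <;>
    (first
    | omega
    | (rename_i i _ j _
       have := Nat.mod_two_eq_zero_or_one (i + c)
       have := Nat.mod_two_eq_zero_or_one (i + 1 + c)
       have := Nat.mod_two_eq_zero_or_one (j + c)
       have := Nat.mod_two_eq_zero_or_one (j + 1 + c)
       omega)
    | (rename_i i j
       have := Nat.mod_two_eq_zero_or_one (i + c)
       have := Nat.mod_two_eq_zero_or_one (i + 1 + c)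
       have := Nat.mod_two_eq_zero_or_one (j + c)
       have := Nat.mod_two_eq_zero_or_one (j + 1 + c)
       omega)
    | (rename_i j _
       have := Nat.mod_two_eq_zero_or_one (j + c)
       have := Nat.mod_two_eq_zero_or_one (j + 1 + c)
       omega)
    | (rename_i j
       have := Nat.mod_two_eq_zero_or_one (j + c)
       have := Nat.mod_two_eq_zero_or_one (j + 1 + c)
       omega))

/-- The embedding: pattern offset `c` is 0 for `b = true`, 1 for `b = false`. -/
def DLemb (ℓ c : ℕ) (hℓ : 1 ≤ ℓ) (hc : c ≤ 1) :
    TwoPageEmbedding (DLVert ℓ) (DLEdge ℓ) where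
  pos := fun x => DLposV ℓ c x.val
  pos_inj := DLposV_inj ℓ c hc
  topo := DLposV_topo ℓ c hc
  page := fun x _ => DLpageV c x.val
  no_cross := DL_no_cross ℓ c hℓ hc

lemma DLemb_pos (ℓ c : ℕ) (hℓ : 1 ≤ ℓ) (hc : c ≤ 1) (x : DLVert ℓ) :
    (DLemb ℓ c hℓ hc).pos x = DLposV ℓ c x.val := rfl

/-- for every `ℓ ≥ 1` and every Boolean `b`, the double ladder of
length `ℓ` has a 2-page book embedding whose spine order is: first `s1` and `s2`
(in some order); then, for `i = 0, …, ℓ` in increasing order, the triple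
`u i, v i, w i` in three consecutive positions, ordered `w < v < u` for even `i`
and `u < v < w` for odd `i` if `b = true`, and ordered `u < v < w` for even `i`
and `w < v < u` for odd `i` if `b = false`; finally `t1` and `t2` (in some order). -/
theorem doubleLadder_twoPage_with_pattern (ℓ : ℕ) (hℓ : 1 ≤ ℓ) (b : Bool) :
    ∃ emb : TwoPageEmbedding (DLVert ℓ) (DLEdge ℓ),
      (∀ x : DLVert ℓ, x.val ≠ DLV.s1 → x.val ≠ DLV.s2 →
        emb.pos (DLs1 ℓ) < emb.pos x ∧ emb.pos (DLs2 ℓ) < emb.pos x) ∧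
      (∀ x : DLVert ℓ, x.val ≠ DLV.t1 → x.val ≠ DLV.t2 →
        emb.pos x < emb.pos (DLt1 ℓ) ∧ emb.pos x < emb.pos (DLt2 ℓ)) ∧
      (∀ i : ℕ, ∀ h : i ≤ ℓ,
        emb.Consec (DLlo ℓ b i h) (DLv ℓ i h) ∧
        emb.Consec (DLv ℓ i h) (DLhi ℓ b i h)) ∧
      (∀ i j : ℕ, i < j → j ≤ ℓ → TripleBefore emb i j) := by
  have hc : (if b then 0 else 1 : ℕ) ≤ 1 := by cases b <;> simp
  refine ⟨DLemb ℓ (if b then 0 else 1) hℓ hc, ?_, ?_, ?_, ?_⟩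
  · rintro ⟨x, hx⟩ h1 h2
    simp only [DLemb_pos, DLs1, DLs2] at *
    cases x <;> simp_all [DLemb, DLposV, DLV.valid] <;> omega
  · rintro ⟨x, hx⟩ h1 h2
    simp only [DLemb_pos, DLt1, DLt2] at *
    cases x <;> simp_all [DLemb, DLposV, DLV.valid] <;> simp only [DLV.valid] at hx <;> omega
  · intro i h
    have hlo : (DLemb ℓ (if b then 0 else 1) hℓ hc).pos (DLlo ℓ b i h) = 3*i+2 := by
      rw [DLemb_pos]
      cases b <;> simp only [DLlo, DLw, DLu, if_true, if_false] <;>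
        split_ifs with hh <;> simp_all [DLposV] <;> omega
    have hv : (DLemb ℓ (if b then 0 else 1) hℓ hc).pos (DLv ℓ i h) = 3*i+3 := by
      rw [DLemb_pos]; rfl
    have hhi : (DLemb ℓ (if b then 0 else 1) hℓ hc).pos (DLhi ℓ b i h) = 3*i+4 := by
      rw [DLemb_pos]
      cases b <;> simp only [DLhi, DLw, DLu, if_true, if_false] <;>
        split_ifs with hh <;> simp_all [DLposV] <;> omega
    refine ⟨⟨by omega, fun x => ?_⟩, ⟨by omega, fun x => ?_⟩⟩ <;> simp only [hlo, hv, hhi] <;> omega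
  · intro i j hij hj x y hx hy
    rcases hx with hx | hx | hx <;> rcases hy with hy | hy | hy <;>
      have hxv : x.val.valid ℓ := x.2 <;> have hyv : y.val.valid ℓ := y.2 <;>
      rw [DLemb_pos, DLemb_pos, hx, hy] <;>
      rw [hx] at hxv <;> rw [hy] at hyv <;>
      simp only [DLposV, DLV.valid] at * <;> omega
end

section
/- In every 2-page book embedding of the double ladder of length ℓ, for each i ∈ {0,…,ℓ−1} the spine order contains one of the following two patterns: the vertices u_i, v_i, w_i occupy three consecutive positions in this order and the vertices w_{i+1}, v_{i+1}, u_{i+1} occupy three consecutive positions in this order, with all of u_i, v_i, w_i preceding all of u_{i+1}, v_{i+1}, w_{i+1}; or the vertices w_i, v_i, u_i occupy three consecutive positions in this order and the vertices u_{i+1}, v_{i+1}, w_{i+1} occupy three consecutive positions in this order, with all of u_i, v_i, w_i preceding all of u_{i+1}, v_{i+1}, w_{i+1}. -/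
namespace TwoPageEmbedding

variable {V : Type*} {E : V → V → Prop} (emb : TwoPageEmbedding V E)

-- Reducible, so that `omega` sees through it: below, every crossing hypothesis is discharged by
-- `omega` from the positions in the context.
abbrev Crossing (a b c d : V) : Prop :=
  emb.pos a < emb.pos c ∧ emb.pos c < emb.pos b ∧ emb.pos b < emb.pos d ∨
    emb.pos c < emb.pos a ∧ emb.pos a < emb.pos d ∧ emb.pos d < emb.pos b

theorem pos_ne {a b : V} (h : a ≠ b) : emb.pos a ≠ emb.pos b :=
  emb.pos_inj.ne h

theorem page_ne_of_crossing {a b c d : V} (hab : E a b) (hcd : E c d)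
    (h : emb.Crossing a b c d) : emb.page a b ≠ emb.page c d := by
  rcases h with h | h
  · exact fun hp => emb.no_cross a b c d hab hcd hp h
  · exact fun hp => emb.no_cross c d a b hcd hab hp.symm h

theorem not_crossing_triangle {a₁ b₁ a₂ b₂ a₃ b₃ : V}
    (e₁ : E a₁ b₁) (e₂ : E a₂ b₂) (e₃ : E a₃ b₃)
    (h₁₂ : emb.Crossing a₁ b₁ a₂ b₂ := by omega) (h₂₃ : emb.Crossing a₂ b₂ a₃ b₃ := by omega)
    (h₃₁ : emb.Crossing a₃ b₃ a₁ b₁ := by omega) : False := by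
  have h₁ := emb.page_ne_of_crossing e₁ e₂ h₁₂
  have h₂ := emb.page_ne_of_crossing e₂ e₃ h₂₃
  have h₃ := emb.page_ne_of_crossing e₃ e₁ h₃₁
  revert h₁ h₂ h₃
  generalize emb.page a₁ b₁ = p₁, emb.page a₂ b₂ = p₂, emb.page a₃ b₃ = p₃
  cases p₁ <;> cases p₂ <;> cases p₃ <;> decide

theorem not_crossing_pentagon {a₁ b₁ a₂ b₂ a₃ b₃ a₄ b₄ a₅ b₅ : V}
    (e₁ : E a₁ b₁) (e₂ : E a₂ b₂) (e₃ : E a₃ b₃) (e₄ : E a₄ b₄) (e₅ : E a₅ b₅)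
    (h₁₂ : emb.Crossing a₁ b₁ a₂ b₂ := by omega) (h₂₃ : emb.Crossing a₂ b₂ a₃ b₃ := by omega)
    (h₃₄ : emb.Crossing a₃ b₃ a₄ b₄ := by omega) (h₄₅ : emb.Crossing a₄ b₄ a₅ b₅ := by omega)
    (h₅₁ : emb.Crossing a₅ b₅ a₁ b₁ := by omega) : False := by
  have h₁ := emb.page_ne_of_crossing e₁ e₂ h₁₂
  have h₂ := emb.page_ne_of_crossing e₂ e₃ h₂₃
  have h₃ := emb.page_ne_of_crossing e₃ e₄ h₃₄
  have h₄ := emb.page_ne_of_crossing e₄ e₅ h₄₅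
  have h₅ := emb.page_ne_of_crossing e₅ e₁ h₅₁
  revert h₁ h₂ h₃ h₄ h₅
  generalize emb.page a₁ b₁ = p₁, emb.page a₂ b₂ = p₂, emb.page a₃ b₃ = p₃,
    emb.page a₄ b₄ = p₄, emb.page a₅ b₅ = p₅
  cases p₁ <;> cases p₂ <;> cases p₃ <;> cases p₄ <;> cases p₅ <;> decide

theorem exists_consec {a x : V} (h : emb.pos a < emb.pos x) : ∃ b, emb.Consec a b := by
  classical
  have hex : ∃ n, ∃ y, emb.pos a < emb.pos y ∧ emb.pos y = n := ⟨_, x, h, rfl⟩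
  obtain ⟨b, hab, hb⟩ := Nat.find_spec hex
  refine ⟨b, hab, fun y ⟨hay, hyb⟩ => ?_⟩
  exact absurd (Nat.find_min' hex ⟨y, hay, rfl⟩) (by omega)

theorem exists_forall_pos_le [Nonempty V] : ∃ m, ∀ x, emb.pos m ≤ emb.pos x := by
  classical
  have hex : ∃ n, ∃ y, emb.pos y = n := ⟨_, Classical.arbitrary V, rfl⟩
  obtain ⟨m, hm⟩ := Nat.find_spec hex
  exact ⟨m, fun x => hm ▸ Nat.find_min' hex ⟨x, rfl⟩⟩

theorem consec_of_forall_consec {a b : V} (hab : emb.pos a < emb.pos b)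
    (h : ∀ m, emb.Consec a m → m = b) : emb.Consec a b := by
  obtain ⟨m, hm⟩ := emb.exists_consec hab
  exact h m hm ▸ hm

def Ready (a x : V) : Prop :=
  emb.pos a < emb.pos x ∧ ∀ y, E y x → emb.pos y ≤ emb.pos a

variable {emb}

namespace Consec

variable {a b x : V}

theorem le_pred (h : emb.Consec a b) (hx : emb.pos x < emb.pos b) : emb.pos x ≤ emb.pos a :=
  not_lt.1 fun hax => h.2 x ⟨hax, hx⟩

theorem succ_le (h : emb.Consec a b) (hx : emb.pos a < emb.pos x) : emb.pos b ≤ emb.pos x :=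
  not_lt.1 fun hxb => h.2 x ⟨hx, hxb⟩

theorem succ_lt (h : emb.Consec a b) (hx : emb.pos a < emb.pos x) (hxb : x ≠ b) :
    emb.pos b < emb.pos x :=
  lt_of_le_of_ne (h.succ_le hx) (emb.pos_ne hxb).symm

theorem lt_pred (h : emb.Consec a b) (hx : emb.pos x < emb.pos b) (hxa : x ≠ a) :
    emb.pos x < emb.pos a :=
  lt_of_le_of_ne (h.le_pred hx) (emb.pos_ne hxa)

theorem pos_le_of_edge (h : emb.Consec a b) {y : V} (hy : E y b) : emb.pos y ≤ emb.pos a :=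
  h.le_pred (emb.topo hy)

theorem ready (h : emb.Consec a b) : emb.Ready a b :=
  ⟨h.1, fun _ hy => h.pos_le_of_edge hy⟩

theorem ready_or_edge (h : emb.Consec a b) (hx : emb.Ready b x) : emb.Ready a x ∨ E b x := by
  by_cases hbx : E b x
  · exact .inr hbx
  · refine .inl ⟨h.1.trans hx.1, fun y hy => h.le_pred (lt_of_le_of_ne (hx.2 y hy) (emb.pos_ne ?_))⟩
    rintro rfl
    exact hbx hy

end Consec

variable (emb)

theorem pos_le_of_chain {n : ℕ} (f : ∀ i, i ≤ n → V)
    (hf : ∀ i (h : i < n), E (f i h.le) (f (i + 1) h)) ⦃i j : ℕ⦄ (hij : i ≤ j) (hj : j ≤ n) :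
    emb.pos (f i (hij.trans hj)) ≤ emb.pos (f j hj) := by
  induction j, hij using Nat.le_induction with
  | base => rfl
  | succ j hij ih => exact (ih (by omega)).trans (emb.topo (hf j hj)).le

theorem eq_succ_of_ready_chain {n i j : ℕ} {c : V} (f : ∀ i, i ≤ n → V)
    (hf : ∀ i (h : i < n), E (f i h.le) (f (i + 1) h)) (hi : i < n)
    (hfi : emb.pos (f i hi.le) ≤ emb.pos c) (hfi' : emb.pos c < emb.pos (f (i + 1) hi))
    (hj : j ≤ n) (hready : emb.Ready c (f j hj)) : j = i + 1 := by
  obtain ⟨hcj, hin⟩ := hready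
  rcases lt_trichotomy j (i + 1) with hji | rfl | hji
  · have := emb.pos_le_of_chain f hf (Nat.le_of_lt_succ hji) hi.le
    omega
  · rfl
  · obtain ⟨k, rfl⟩ : ∃ k, j = k + 1 := ⟨j - 1, by omega⟩
    have := hin _ (hf k hj)
    have := emb.pos_le_of_chain f hf (Nat.le_of_lt_succ hji) (Nat.le_of_succ_le hj)
    omega

variable {emb}

theorem pos_lt_of_spanning_edge {L A B C p q : V} (hLC : E L C) (hAp : E A p) (hBq : E B q)
    (hLA : emb.pos L < emb.pos A) (hAB : emb.pos A < emb.pos B) (hBC : emb.pos B < emb.pos C)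
    (hp : emb.pos C < emb.pos p) (hpq : p ≠ q) :
    emb.pos q < emb.pos p :=
  lt_of_le_of_ne (not_lt.1 fun _ => emb.not_crossing_triangle hLC hAp hBq) (emb.pos_ne hpq).symm

theorem consec_three_of_zigzag {L A B C X Y Z al be : V}
    (hLC : E L C) (hBX : E B X) (hBY : E B Y) (hAY : E A Y) (hAZ : E A Z)
    (hXal : E X al) (hYal : E Y al) (hYbe : E Y be) (hZbe : E Z be)
    (hXout : ∀ x, E X x → x = al) (hYout : ∀ x, E Y x → x = al ∨ x = be)
    (hLA : emb.pos L < emb.pos A) (hAB : emb.pos A < emb.pos B) (hBC : emb.pos B < emb.pos C)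
    (hX : emb.pos C < emb.pos X) (hY : emb.pos C < emb.pos Y) (hZ : emb.pos C < emb.pos Z)
    (hready : ∀ x, emb.Ready C x → x = X ∨ x = Y ∨ x = Z)
    (hXY : X ≠ Y) (hXZ : X ≠ Z) (hYZ : Y ≠ Z) (hal_be : al ≠ be) (hal_Z : al ≠ Z) :
    emb.Consec C X ∧ emb.Consec X Y ∧ emb.Consec Y Z := by
  have hXY_pos := pos_lt_of_spanning_edge hLC hAY hBX hLA hAB hBC hY hXY.symm
  have hXZ_pos := pos_lt_of_spanning_edge hLC hAZ hBX hLA hAB hBC hZ hXZ.symm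
  have hYZ_pos := pos_lt_of_spanning_edge hLC hAZ hBY hLA hAB hBC hZ hYZ.symm
  have := emb.topo hYal
  have := emb.topo hYbe
  have := emb.topo hZbe
  have hCX : emb.Consec C X := emb.consec_of_forall_consec hX fun m hm => by
    have := hm.succ_le hX
    rcases hready m hm.ready with rfl | rfl | rfl <;> first | rfl | omega
  have hXY' : emb.Consec X Y := emb.consec_of_forall_consec hXY_pos fun m hm => by
    have := hm.1
    have := hm.succ_le hXY_pos
    rcases hCX.ready_or_edge hm.ready with hm' | hm'
    · rcases hready m hm' with rfl | rfl | rfl <;> first | rfl | omega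
    · obtain rfl := hXout m hm'
      omega
  refine ⟨hCX, hXY', emb.consec_of_forall_consec hYZ_pos fun m hm => ?_⟩
  have := hm.1
  have := hXY'.1
  have := hm.succ_le hYZ_pos
  have := hm.succ_le (emb.topo hYbe)
  have hm_al : m ≠ al := by
    rintro rfl
    have := emb.pos_ne hal_be
    have := emb.pos_ne hal_Z
    exact emb.not_crossing_pentagon hXal hYbe hAZ hLC hBY
  rcases hXY'.ready_or_edge hm.ready with hm' | hm'
  · rcases hCX.ready_or_edge hm' with hm' | hm'
    · rcases hready m hm' with rfl | rfl | rfl <;> first | rfl | omega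
    · exact absurd (hXout m hm') hm_al
  · rcases hYout m hm' with h | rfl
    · exact absurd h hm_al
    · omega

theorem pos_lt_of_common_out {X B' C' be x d : V}
    (hXB' : E X B') (hB'be : E B' be) (hC'be : E C' be) (hC'x : E C' x) (hxd : E x d)
    (hbed : E be d) (hXC' : emb.pos X < emb.pos C') (hC'B' : emb.pos C' < emb.pos B')
    (hxbe : x ≠ be) (hxB' : x ≠ B') : emb.pos be < emb.pos x := by
  have := emb.topo hB'be
  have := emb.topo hC'x
  have := emb.topo hbed
  refine lt_of_le_of_ne (not_lt.1 fun _ => ?_) (emb.pos_ne hxbe.symm)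
  rcases lt_or_gt_of_ne (emb.pos_ne hxB') with h | h
  · exact emb.not_crossing_triangle hXB' hC'be hxd
  · exact emb.not_crossing_pentagon hB'be hxd hC'be hXB' hC'x

theorem consec_second_of_ready {C X A' B' C' be : V}
    (hXB' : E X B') (hB'be : E B' be) (hC'be : E C' be)
    (hC'out : ∀ x, E C' x → x ≠ be → ∃ d, E x d ∧ E be d)
    (hCC' : emb.Consec C C') (hXC : emb.pos X < emb.pos C) (hB' : emb.pos C < emb.pos B')
    (hB'A' : emb.pos B' < emb.pos A')
    (hready : ∀ x, emb.Ready C x → x = A' ∨ x = B' ∨ x = C') (hB'C' : B' ≠ C') :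
    emb.Consec C' B' := by
  have hC'B' := hCC'.succ_lt hB' hB'C'
  have := hCC'.1
  have := emb.topo hB'be
  refine emb.consec_of_forall_consec hC'B' fun m hm => ?_
  have := hm.1
  have := hm.succ_le hC'B'
  rcases hCC'.ready_or_edge hm.ready with hm' | hm'
  · rcases hready m hm' with rfl | rfl | rfl <;> first | rfl | omega
  by_contra hmB'
  rcases eq_or_ne m be with rfl | hmbe
  · omega
  obtain ⟨_, hmd, hbed⟩ := hC'out m hm' hmbe
  have := pos_lt_of_common_out hXB' hB'be hC'be hm' hmd hbed (by omega) hC'B' hmbe hmB'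
  omega

theorem consec_third_of_ready {C X A' B' C' al be : V}
    (hXB' : E X B') (hA'al : E A' al) (hB'al : E B' al) (hB'be : E B' be) (hC'be : E C' be)
    (hB'out : ∀ x, E B' x → x = al ∨ x = be)
    (hC'out : ∀ x, E C' x → x ≠ be → ∃ d, E x d ∧ E be d)
    (hCC' : emb.Consec C C') (hC'B' : emb.Consec C' B') (hXC : emb.pos X < emb.pos C)
    (hB'A' : emb.pos B' < emb.pos A')
    (hready : ∀ x, emb.Ready C x → x = A' ∨ x = B' ∨ x = C')
    (hbe : ¬(emb.pos be < emb.pos A' ∧ emb.pos be < emb.pos al))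
    (hal_be : al ≠ be) (hA'be : A' ≠ be) :
    emb.Consec B' A' := by
  have := hCC'.1
  have := hC'B'.1
  have := emb.topo hA'al
  have := emb.pos_ne hal_be
  have := emb.pos_ne hA'be
  refine emb.consec_of_forall_consec hB'A' fun m hm => ?_
  have := hm.1
  have := hm.succ_le hB'A'
  have := hm.succ_le (emb.topo hB'be)
  have := hm.succ_le (emb.topo hB'al)
  rcases hC'B'.ready_or_edge hm.ready with hm' | hm'
  · rcases hCC'.ready_or_edge hm' with hm' | hm'
    · rcases hready m hm' with rfl | rfl | rfl <;> first | rfl | omega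
    rcases eq_or_ne m be with rfl | hmbe
    · omega
    obtain ⟨_, hmd, hbed⟩ := hC'out m hm' hmbe
    have := pos_lt_of_common_out hXB' hB'be hC'be hm' hmd hbed (by omega) hC'B'.1 hmbe
      (by rintro rfl; omega)
    omega
  · rcases hB'out m hm' with rfl | rfl <;> omega

theorem consec_three_of_parallel {L A B C A' B' C' al be : V}
    (hLC : E L C) (hAA' : E A A') (hBB' : E B B') (hCC' : E C C')
    (hA'al : E A' al) (hB'al : E B' al) (hB'be : E B' be) (hC'be : E C' be)
    (hB'out : ∀ x, E B' x → x = al ∨ x = be)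
    (hC'out : ∀ x, E C' x → x ≠ be → ∃ d, E x d ∧ E be d)
    (hLA : emb.pos L < emb.pos A) (hAB : emb.pos A < emb.pos B) (hBC : emb.pos B < emb.pos C)
    (hA' : emb.pos C < emb.pos A') (hB' : emb.pos C < emb.pos B')
    (hready : ∀ x, emb.Ready C x → x = A' ∨ x = B' ∨ x = C')
    (hA'B' : A' ≠ B') (hA'C' : A' ≠ C') (hB'C' : B' ≠ C') (hal_be : al ≠ be) (hA'be : A' ≠ be) :
    emb.Consec C C' ∧ emb.Consec C' B' ∧ emb.Consec B' A' := by
  have hB'A' := pos_lt_of_spanning_edge hLC hAA' hBB' hLA hAB hBC hA' hA'B'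
  have := emb.topo hCC'
  have := emb.topo hA'al
  have := emb.topo hB'be
  have := emb.topo hC'be
  have hCC'' : emb.Consec C C' := emb.consec_of_forall_consec (emb.topo hCC') fun m hm => by
    have := hm.succ_le hB'
    rcases hready m hm.ready with rfl | rfl | rfl
    · omega
    · have := hm.succ_lt (emb.topo hCC') hB'C'.symm
      rcases lt_or_gt_of_ne (emb.pos_ne hA'C') with h | h
      · exact (emb.not_crossing_pentagon hCC' hB'be hAA' hLC hBB').elim
      · exact (emb.not_crossing_pentagon hCC' hB'al hAA' hLC hBB').elim
    · rfl
  have hC'B' := consec_second_of_ready hBB' hB'be hC'be hC'out hCC'' hBC hB' hB'A' hready hB'C'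
  have := hC'B'.1
  refine ⟨hCC'', hC'B', consec_third_of_ready hBB' hA'al hB'al hB'be hC'be hB'out hC'out hCC''
    hC'B' hBC hB'A' hready ?_ hal_be hA'be⟩
  exact fun ⟨_, _⟩ => emb.not_crossing_pentagon hC'be hB'al hAA' hLC hBB'

theorem consec_first_of_sources {P Q A' B' C' al be ε : V}
    (hPA' : E P A') (hPB' : E P B') (hQB' : E Q B') (hQC' : E Q C')
    (hA'al : E A' al) (hB'al : E B' al) (hB'be : E B' be) (hC'be : E C' be)
    (halε : E al ε) (hbeε : E be ε) (hPQ : emb.pos P < emb.pos Q)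
    (hA' : emb.pos Q < emb.pos A') (hready : ∀ x, emb.Ready Q x → x = A' ∨ x = B' ∨ x = C')
    (hA'B' : A' ≠ B') (hA'C' : A' ≠ C') (hB'C' : B' ≠ C') (hal_be : al ≠ be)
    (hA'be : A' ≠ be) : emb.Consec Q C' := by
  have := emb.topo hQB'
  have := emb.topo hA'al
  have := emb.topo hB'al
  have := emb.topo hB'be
  have := emb.topo hC'be
  have := emb.topo halε
  have := emb.topo hbeε
  have hal_be' := lt_or_gt_of_ne (emb.pos_ne hal_be)
  refine emb.consec_of_forall_consec (emb.topo hQC') fun m hm => ?_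
  rcases hready m hm.ready with rfl | rfl | rfl
  · exfalso
    have := hm.succ_lt (emb.topo hQB') hA'B'.symm
    have := hm.succ_lt (emb.topo hQC') hA'C'.symm
    rcases lt_or_gt_of_ne (emb.pos_ne hB'C') with h | h
    · exact emb.not_crossing_pentagon hPB' hA'al hQB' hPA' hQC'
    rcases hal_be' with h' | h'
    · exact emb.not_crossing_triangle hA'al hC'be hPB'
    · exact emb.not_crossing_pentagon hC'be hB'al hbeε hA'al hPB'
  · exfalso
    have := hm.succ_lt hA' hA'B'
    have := hm.succ_lt (emb.topo hQC') hB'C'.symm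
    rcases lt_or_gt_of_ne (emb.pos_ne hA'C') with h | h
    · exact emb.not_crossing_triangle hPA' hQC' hB'be
    rcases lt_or_gt_of_ne (emb.pos_ne hA'be) with h' | h'
    · rcases hal_be' with h'' | h''
      · exact emb.not_crossing_triangle hPA' hC'be hB'al
      · exact emb.not_crossing_pentagon hA'al hbeε hB'al hPA' hC'be
    · exact emb.not_crossing_triangle hPA' hbeε hB'al
  · rfl

theorem consec_three_of_sources {P Q A' B' C' al be ε : V}
    (hPA' : E P A') (hPB' : E P B') (hQB' : E Q B') (hQC' : E Q C')
    (hA'al : E A' al) (hB'al : E B' al) (hB'be : E B' be) (hC'be : E C' be)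
    (halε : E al ε) (hbeε : E be ε)
    (hB'out : ∀ x, E B' x → x = al ∨ x = be)
    (hC'out : ∀ x, E C' x → x ≠ be → ∃ d, E x d ∧ E be d)
    (hPQ : emb.pos P < emb.pos Q) (hA' : emb.pos Q < emb.pos A')
    (hready : ∀ x, emb.Ready Q x → x = A' ∨ x = B' ∨ x = C')
    (hA'B' : A' ≠ B') (hA'C' : A' ≠ C') (hB'C' : B' ≠ C') (hal_be : al ≠ be) (hA'be : A' ≠ be) :
    emb.Consec Q C' ∧ emb.Consec C' B' ∧ emb.Consec B' A' := by
  have hQC'' := consec_first_of_sources hPA' hPB' hQB' hQC' hA'al hB'al hB'be hC'be halε hbeε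
    hPQ hA' hready hA'B' hA'C' hB'C' hal_be hA'be
  have hB' := emb.topo hQB'
  have := hQC''.1
  have := hQC''.succ_lt hA' hA'C'
  have := emb.topo hPB'
  have := emb.topo hA'al
  have := emb.topo hC'be
  have := emb.topo hB'be
  have := emb.topo halε
  have hB'A' : emb.pos B' < emb.pos A' :=
    lt_of_le_of_ne (not_lt.1 fun _ => emb.not_crossing_triangle hPA' hQB' hC'be)
      (emb.pos_ne hA'B').symm
  have hC'B' := consec_second_of_ready hPB' hB'be hC'be hC'out hQC'' hPQ hB' hB'A' hready hB'C'
  refine ⟨hQC'', hC'B', consec_third_of_ready hPB' hA'al hB'al hB'be hC'be hB'out hC'out hQC''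
    hC'B' hPQ hB'A' hready ?_ hal_be hA'be⟩
  exact fun ⟨_, _⟩ => emb.not_crossing_triangle hPA' hbeε hB'al

end TwoPageEmbedding

namespace DLVert

variable {ℓ : ℕ}

@[simp] theorem eq_iff {x y : DLVert ℓ} : x = y ↔ x.val = y.val := Subtype.ext_iff

theorem eq_cases (x : DLVert ℓ) :
    x = DLs1 ℓ ∨ x = DLs2 ℓ ∨ x = DLt1 ℓ ∨ x = DLt2 ℓ ∨ (∃ i h, x = DLu ℓ i h) ∨
      (∃ i h, x = DLv ℓ i h) ∨ ∃ i h, x = DLw ℓ i h := by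
  obtain ⟨x, hx⟩ := x
  cases x with
  | s1 => exact .inl rfl
  | s2 => exact .inr (.inl rfl)
  | t1 => exact .inr (.inr (.inl rfl))
  | t2 => exact .inr (.inr (.inr (.inl rfl)))
  | u i => exact .inr (.inr (.inr (.inr (.inl ⟨i, hx, rfl⟩))))
  | v i => exact .inr (.inr (.inr (.inr (.inr (.inl ⟨i, hx, rfl⟩)))))
  | w i => exact .inr (.inr (.inr (.inr (.inr (.inr ⟨i, hx, rfl⟩)))))

end DLVert

section

variable {ℓ i : ℕ}

@[simp] theorem DLs1_val : (DLs1 ℓ).val = .s1 := rfl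
@[simp] theorem DLs2_val : (DLs2 ℓ).val = .s2 := rfl
@[simp] theorem DLt1_val : (DLt1 ℓ).val = .t1 := rfl
@[simp] theorem DLt2_val : (DLt2 ℓ).val = .t2 := rfl
@[simp] theorem DLu_val (h : i ≤ ℓ) : (DLu ℓ i h).val = .u i := rfl
@[simp] theorem DLv_val (h : i ≤ ℓ) : (DLv ℓ i h).val = .v i := rfl
@[simp] theorem DLw_val (h : i ≤ ℓ) : (DLw ℓ i h).val = .w i := rfl

end

namespace DLEdge

variable {ℓ i : ℕ}

theorem s1u : DLEdge ℓ (DLs1 ℓ) (DLu ℓ 0 ℓ.zero_le) := DLEdgeV.s1u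
theorem s1v : DLEdge ℓ (DLs1 ℓ) (DLv ℓ 0 ℓ.zero_le) := DLEdgeV.s1v
theorem s2v : DLEdge ℓ (DLs2 ℓ) (DLv ℓ 0 ℓ.zero_le) := DLEdgeV.s2v
theorem s2w : DLEdge ℓ (DLs2 ℓ) (DLw ℓ 0 ℓ.zero_le) := DLEdgeV.s2w
theorem ut1 : DLEdge ℓ (DLu ℓ ℓ le_rfl) (DLt1 ℓ) := DLEdgeV.ut1
theorem vt1 : DLEdge ℓ (DLv ℓ ℓ le_rfl) (DLt1 ℓ) := DLEdgeV.vt1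
theorem vt2 : DLEdge ℓ (DLv ℓ ℓ le_rfl) (DLt2 ℓ) := DLEdgeV.vt2
theorem wt2 : DLEdge ℓ (DLw ℓ ℓ le_rfl) (DLt2 ℓ) := DLEdgeV.wt2
theorem uu (h : i < ℓ) : DLEdge ℓ (DLu ℓ i h.le) (DLu ℓ (i + 1) h) := DLEdgeV.uu h
theorem vu (h : i < ℓ) : DLEdge ℓ (DLv ℓ i h.le) (DLu ℓ (i + 1) h) := DLEdgeV.vu h
theorem vv (h : i < ℓ) : DLEdge ℓ (DLv ℓ i h.le) (DLv ℓ (i + 1) h) := DLEdgeV.vv h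
theorem wv (h : i < ℓ) : DLEdge ℓ (DLw ℓ i h.le) (DLv ℓ (i + 1) h) := DLEdgeV.wv h
theorem ww (h : i < ℓ) : DLEdge ℓ (DLw ℓ i h.le) (DLw ℓ (i + 1) h) := DLEdgeV.ww h

theorem exists_common_out (h : i < ℓ) :
    (∃ d, DLEdge ℓ (DLu ℓ (i + 1) h) d ∧ DLEdge ℓ (DLv ℓ (i + 1) h) d) ∧
      ∃ d, DLEdge ℓ (DLv ℓ (i + 1) h) d ∧ DLEdge ℓ (DLw ℓ (i + 1) h) d := by
  rcases (Nat.succ_le_of_lt h).lt_or_eq with h' | h'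
  · exact ⟨⟨_, uu h', vu h'⟩, _, vv h', wv h'⟩
  · subst h'
    exact ⟨⟨_, ut1, vt1⟩, _, vt2, wt2⟩

-- `al`, `be` are `u (i + 1)`, `v (i + 1)`, or `t₁`, `t₂` at the top level `i = ℓ`.
theorem exists_out (h : i ≤ ℓ) : ∃ al be : DLVert ℓ,
    DLEdge ℓ (DLu ℓ i h) al ∧ DLEdge ℓ (DLv ℓ i h) al ∧ DLEdge ℓ (DLv ℓ i h) be ∧
    DLEdge ℓ (DLw ℓ i h) be ∧ (∀ x, DLEdge ℓ (DLu ℓ i h) x → x = al) ∧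
    (∀ x, DLEdge ℓ (DLv ℓ i h) x → x = al ∨ x = be) ∧
    (∀ x, DLEdge ℓ (DLw ℓ i h) x → x ≠ be → ∃ d, DLEdge ℓ x d ∧ DLEdge ℓ be d) ∧
    (i < ℓ → ∃ d, DLEdge ℓ al d ∧ DLEdge ℓ be d) ∧
    al ≠ be ∧ DLu ℓ i h ≠ be ∧ al ≠ DLw ℓ i h := by
  rcases h.lt_or_eq with h' | rfl
  · obtain ⟨hcommon_uv, hcommon_vw⟩ := exists_common_out h'
    refine ⟨_, _, uu h', vu h', vv h', wv h', ?_, ?_, ?_, fun _ => hcommon_uv,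
      by simp, by simp, by simp⟩
    · rintro ⟨x, hx⟩ (hux : DLEdgeV _ _ x)
      cases hux with
      | ut1 => omega
      | uu => rfl
    · rintro ⟨x, hx⟩ (hvx : DLEdgeV _ _ x)
      cases hvx with
      | vt1 | vt2 => omega
      | vu => exact .inl rfl
      | vv => exact .inr rfl
    · rintro ⟨x, hx⟩ (hwx : DLEdgeV _ _ x) hne
      cases hwx with
      | wt2 => omega
      | wv => exact absurd rfl hne
      | ww => exact hcommon_vw.imp fun _ => And.symm
  · refine ⟨_, _, ut1, vt1, vt2, wt2, ?_, ?_, ?_, fun h => absurd h (lt_irrefl _),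
      by simp, by simp, by simp⟩
    · rintro ⟨x, hx⟩ (hux : DLEdgeV _ _ x)
      cases hux with
      | ut1 => rfl
      | uu h => omega
    · rintro ⟨x, hx⟩ (hvx : DLEdgeV _ _ x)
      cases hvx with
      | vt1 => exact .inl rfl
      | vt2 => exact .inr rfl
      | vu h | vv h => omega
    · rintro ⟨x, hx⟩ (hwx : DLEdgeV _ _ x) hne
      cases hwx with
      | wt2 => exact absurd rfl hne
      | wv h | ww h => omega

end DLEdge

namespace DoubleLadder

open TwoPageEmbedding

variable {ℓ : ℕ} (emb : TwoPageEmbedding (DLVert ℓ) (DLEdge ℓ))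

theorem eq_succ_level_of_ready {i : ℕ} (hi : i < ℓ) {c : DLVert ℓ}
    (hu : emb.pos (DLu ℓ i hi.le) ≤ emb.pos c) (hv : emb.pos (DLv ℓ i hi.le) ≤ emb.pos c)
    (hw : emb.pos (DLw ℓ i hi.le) ≤ emb.pos c) (hu' : emb.pos c < emb.pos (DLu ℓ (i + 1) hi))
    (hv' : emb.pos c < emb.pos (DLv ℓ (i + 1) hi)) (hw' : emb.pos c < emb.pos (DLw ℓ (i + 1) hi)) :
    ∀ x, emb.Ready c x →
      x = DLu ℓ (i + 1) hi ∨ x = DLv ℓ (i + 1) hi ∨ x = DLw ℓ (i + 1) hi := by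
  intro x hx
  have := hx.1
  have hu_mono := emb.pos_le_of_chain (DLu ℓ) fun _ => DLEdge.uu
  have hw_mono := emb.pos_le_of_chain (DLw ℓ) fun _ => DLEdge.ww
  rcases DLVert.eq_cases x with rfl | rfl | rfl | rfl | ⟨j, hj, rfl⟩ | ⟨j, hj, rfl⟩ | ⟨j, hj, rfl⟩
  · have := emb.topo DLEdge.s1u
    have := hu_mono i.zero_le hi.le
    omega
  · have := emb.topo DLEdge.s2w
    have := hw_mono i.zero_le hi.le
    omega
  · have := hx.2 _ DLEdge.ut1
    have := hu_mono (show i + 1 ≤ ℓ from hi) le_rfl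
    omega
  · have := hx.2 _ DLEdge.wt2
    have := hw_mono (show i + 1 ≤ ℓ from hi) le_rfl
    omega
  · obtain rfl := emb.eq_succ_of_ready_chain (DLu ℓ) (fun _ => DLEdge.uu) hi hu hu' hj hx
    exact .inl rfl
  · obtain rfl := emb.eq_succ_of_ready_chain (DLv ℓ) (fun _ => DLEdge.vv) hi hv hv' hj hx
    exact .inr (.inl rfl)
  · obtain rfl := emb.eq_succ_of_ready_chain (DLw ℓ) (fun _ => DLEdge.ww) hi hw hw' hj hx
    exact .inr (.inr rfl)

theorem eq_level_zero_of_ready {Q : DLVert ℓ} (hs₁ : emb.pos (DLs1 ℓ) ≤ emb.pos Q)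
    (hs₂ : emb.pos (DLs2 ℓ) ≤ emb.pos Q)
    (hrest : ∀ x, x ≠ DLs1 ℓ → x ≠ DLs2 ℓ → emb.pos Q < emb.pos x) :
    ∀ x, emb.Ready Q x →
      x = DLu ℓ 0 ℓ.zero_le ∨ x = DLv ℓ 0 ℓ.zero_le ∨ x = DLw ℓ 0 ℓ.zero_le := by
  intro x hx
  have := hx.1
  rcases DLVert.eq_cases x with rfl | rfl | rfl | rfl | ⟨_ | j, hj, rfl⟩ | ⟨_ | j, hj, rfl⟩ |
      ⟨_ | j, hj, rfl⟩
  · omega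
  · omega
  · have := hx.2 _ DLEdge.ut1
    have := hrest (DLu ℓ ℓ le_rfl) (by simp) (by simp)
    omega
  · have := hx.2 _ DLEdge.wt2
    have := hrest (DLw ℓ ℓ le_rfl) (by simp) (by simp)
    omega
  · exact .inl rfl
  · have := hx.2 _ (DLEdge.uu hj)
    have := hrest (DLu ℓ j (Nat.le_of_succ_le hj)) (by simp) (by simp)
    omega
  · exact .inr (.inl rfl)
  · have := hx.2 _ (DLEdge.vv hj)
    have := hrest (DLv ℓ j (Nat.le_of_succ_le hj)) (by simp) (by simp)
    omega
  · exact .inr (.inr rfl)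
  · have := hx.2 _ (DLEdge.ww hj)
    have := hrest (DLw ℓ j (Nat.le_of_succ_le hj)) (by simp) (by simp)
    omega

theorem eq_of_forall_edge_eq_source {s x : DLVert ℓ} (hs : s = DLs1 ℓ ∨ s = DLs2 ℓ)
    (h : ∀ y, DLEdge ℓ y x → y = s) :
    x = DLs1 ℓ ∨ x = DLs2 ℓ ∨ (x = DLu ℓ 0 ℓ.zero_le ∧ s = DLs1 ℓ) ∨
      (x = DLw ℓ 0 ℓ.zero_le ∧ s = DLs2 ℓ) := by
  have not_source : ∀ y, DLEdge ℓ y x → y.val ≠ .s1 → y.val ≠ .s2 → False := fun y hy h₁ h₂ => by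
    rcases hs with rfl | rfl <;> simp_all [h y hy]
  rcases DLVert.eq_cases x with rfl | rfl | rfl | rfl | ⟨_ | j, hj, rfl⟩ | ⟨_ | j, hj, rfl⟩ |
      ⟨_ | j, hj, rfl⟩
  · exact .inl rfl
  · exact .inr (.inl rfl)
  · exact (not_source _ DLEdge.ut1 (by simp) (by simp)).elim
  · exact (not_source _ DLEdge.wt2 (by simp) (by simp)).elim
  · exact .inr (.inr (.inl ⟨rfl, (h _ DLEdge.s1u).symm⟩))
  · exact (not_source _ (DLEdge.uu hj) (by simp) (by simp)).elim
  · exact absurd ((h _ DLEdge.s1v).trans (h _ DLEdge.s2v).symm) (by simp)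
  · exact (not_source _ (DLEdge.vv hj) (by simp) (by simp)).elim
  · exact .inr (.inr (.inr ⟨rfl, (h _ DLEdge.s2w).symm⟩))
  · exact (not_source _ (DLEdge.ww hj) (by simp) (by simp)).elim

theorem false_of_s1_u0_first (hl : 0 < ℓ) (hs₁ : emb.pos (DLs1 ℓ) < emb.pos (DLu ℓ 0 ℓ.zero_le))
    (hrest : ∀ x, x ≠ DLs1 ℓ → x ≠ DLu ℓ 0 ℓ.zero_le → emb.pos (DLu ℓ 0 ℓ.zero_le) < emb.pos x) :
    False := by
  obtain ⟨⟨ε, hu₁ε, hv₁ε⟩, -⟩ := DLEdge.exists_common_out hl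
  have := hrest (DLs2 ℓ) (by simp) (by simp)
  have := hrest (DLv ℓ 0 ℓ.zero_le) (by simp) (by simp)
  have := hrest (DLw ℓ 0 ℓ.zero_le) (by simp) (by simp)
  have := emb.topo DLEdge.s1v
  have := emb.topo DLEdge.s2v
  have := emb.topo DLEdge.s2w
  have := emb.topo (DLEdge.uu hl)
  have := emb.topo (DLEdge.vu hl)
  have := emb.topo (DLEdge.vv hl)
  have := emb.topo (DLEdge.wv hl)
  have := emb.topo hu₁ε
  have := emb.topo hv₁ε
  have huv := lt_or_gt_of_ne (emb.pos_ne (show DLu ℓ (0 + 1) hl ≠ DLv ℓ (0 + 1) hl by simp))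
  rcases lt_or_gt_of_ne (emb.pos_ne (show DLv ℓ 0 ℓ.zero_le ≠ DLw ℓ 0 ℓ.zero_le by simp))
    with hvw | hvw
  · rcases lt_or_gt_of_ne (emb.pos_ne (show DLu ℓ (0 + 1) hl ≠ DLw ℓ 0 ℓ.zero_le by simp))
      with huw | huw
    · exact emb.not_crossing_triangle DLEdge.s1v (DLEdge.uu hl) DLEdge.s2w
    rcases huv with huv | huv
    · exact emb.not_crossing_pentagon (DLEdge.vu hl) (DLEdge.wv hl) (DLEdge.uu hl) DLEdge.s1v
        DLEdge.s2w
    · exact emb.not_crossing_pentagon (DLEdge.vu hl) hv₁ε (DLEdge.uu hl) DLEdge.s1v DLEdge.s2w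
  · rcases huv with huv | huv
    · exact emb.not_crossing_triangle DLEdge.s1v (DLEdge.wv hl) (DLEdge.uu hl)
    · exact emb.not_crossing_pentagon (DLEdge.vu hl) hv₁ε (DLEdge.uu hl) DLEdge.s1v
        (DLEdge.wv hl)

theorem false_of_s2_w0_first (hl : 0 < ℓ) (hs₂ : emb.pos (DLs2 ℓ) < emb.pos (DLw ℓ 0 ℓ.zero_le))
    (hrest : ∀ x, x ≠ DLs2 ℓ → x ≠ DLw ℓ 0 ℓ.zero_le → emb.pos (DLw ℓ 0 ℓ.zero_le) < emb.pos x) :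
    False := by
  obtain ⟨⟨ε, hu₁ε, hv₁ε⟩, -⟩ := DLEdge.exists_common_out hl
  have := hrest (DLs1 ℓ) (by simp) (by simp)
  have := hrest (DLu ℓ 0 ℓ.zero_le) (by simp) (by simp)
  have := hrest (DLv ℓ 0 ℓ.zero_le) (by simp) (by simp)
  have := emb.topo DLEdge.s1u
  have := emb.topo DLEdge.s1v
  have := emb.topo DLEdge.s2v
  have := emb.topo (DLEdge.uu hl)
  have := emb.topo (DLEdge.vu hl)
  have := emb.topo (DLEdge.vv hl)
  have := emb.topo (DLEdge.wv hl)
  have := emb.topo hu₁ε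
  have := emb.topo hv₁ε
  have huv := lt_or_gt_of_ne (emb.pos_ne (show DLu ℓ (0 + 1) hl ≠ DLv ℓ (0 + 1) hl by simp))
  rcases lt_or_gt_of_ne (emb.pos_ne (show DLu ℓ 0 ℓ.zero_le ≠ DLv ℓ 0 ℓ.zero_le by simp))
    with huv₀ | huv₀
  · rcases huv with huv | huv
    · exact emb.not_crossing_pentagon (DLEdge.wv hl) hu₁ε (DLEdge.vv hl) (DLEdge.uu hl)
        DLEdge.s2v
    · exact emb.not_crossing_triangle DLEdge.s2v (DLEdge.wv hl) (DLEdge.uu hl)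
  rcases lt_or_gt_of_ne (emb.pos_ne (show DLu ℓ 0 ℓ.zero_le ≠ DLv ℓ (0 + 1) hl by simp))
    with huv₁ | huv₁
  · rcases huv with huv | huv
    · exact emb.not_crossing_pentagon (DLEdge.wv hl) hu₁ε (DLEdge.vv hl) DLEdge.s1u DLEdge.s2v
    · exact emb.not_crossing_pentagon (DLEdge.uu hl) hv₁ε (DLEdge.vu hl) DLEdge.s1u
        (DLEdge.vv hl)
  · exact emb.not_crossing_triangle DLEdge.s1u hv₁ε (DLEdge.vu hl)

theorem exists_first_two_eq_sources (hl : 0 < ℓ) : ∃ P Q : DLVert ℓ,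
    (P = DLs1 ℓ ∧ Q = DLs2 ℓ ∨ P = DLs2 ℓ ∧ Q = DLs1 ℓ) ∧ emb.pos P < emb.pos Q ∧
      ∀ x, x ≠ P → x ≠ Q → emb.pos Q < emb.pos x := by
  have : Nonempty (DLVert ℓ) := ⟨DLs1 ℓ⟩
  obtain ⟨P, hP⟩ := emb.exists_forall_pos_le
  have hP_lt : ∀ x, x ≠ P → emb.pos P < emb.pos x := fun x hx =>
    lt_of_le_of_ne (hP x) (emb.pos_ne hx.symm)
  have hP_src : P = DLs1 ℓ ∨ P = DLs2 ℓ := by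
    have hP_in : ∀ y, ¬DLEdge ℓ y P := fun y hy => absurd (hP y) (not_le.2 (emb.topo hy))
    rcases eq_of_forall_edge_eq_source (.inl rfl) (fun y hy => (hP_in y hy).elim) with
      h | h | ⟨rfl, -⟩ | ⟨rfl, -⟩
    · exact .inl h
    · exact .inr h
    · exact (hP_in _ DLEdge.s1u).elim
    · exact (hP_in _ DLEdge.s2w).elim
  obtain ⟨x, hx⟩ : ∃ x, x ≠ P := by
    rcases hP_src with rfl | rfl
    exacts [⟨DLs2 ℓ, by simp⟩, ⟨DLs1 ℓ, by simp⟩]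
  obtain ⟨Q, hQ⟩ := emb.exists_consec (hP_lt x hx)
  have hQ_in : ∀ y, DLEdge ℓ y Q → y = P := fun y hy =>
    emb.pos_inj (le_antisymm (hQ.pos_le_of_edge hy) (hP y))
  have hrest : ∀ x, x ≠ P → x ≠ Q → emb.pos Q < emb.pos x := fun x hxP hxQ =>
    hQ.succ_lt (hP_lt x hxP) hxQ
  refine ⟨P, Q, ?_, hQ.1, hrest⟩
  rcases eq_of_forall_edge_eq_source hP_src hQ_in with rfl | rfl | ⟨rfl, rfl⟩ | ⟨rfl, rfl⟩
  · rcases hP_src with rfl | rfl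
    · exact absurd hQ.1 (lt_irrefl _)
    · exact .inr ⟨rfl, rfl⟩
  · rcases hP_src with rfl | rfl
    · exact .inl ⟨rfl, rfl⟩
    · exact absurd hQ.1 (lt_irrefl _)
  · exact (false_of_s1_u0_first emb hl hQ.1 hrest).elim
  · exact (false_of_s2_w0_first emb hl hQ.1 hrest).elim

theorem consec_uvw_or_wvu_zero (hl : 0 < ℓ) :
    (emb.Consec (DLu ℓ 0 hl.le) (DLv ℓ 0 hl.le) ∧ emb.Consec (DLv ℓ 0 hl.le) (DLw ℓ 0 hl.le)) ∨
      (emb.Consec (DLw ℓ 0 hl.le) (DLv ℓ 0 hl.le) ∧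
        emb.Consec (DLv ℓ 0 hl.le) (DLu ℓ 0 hl.le)) := by
  obtain ⟨P, Q, hPQ, hPQ', hrest⟩ := exists_first_two_eq_sources emb hl
  obtain ⟨al, be, hual, hval, hvbe, hwbe, hu_out, hv_out, hw_out, hcommon, hal_be, hu_be, hal_w⟩ :=
    DLEdge.exists_out ℓ.zero_le
  obtain ⟨ε, halε, hbeε⟩ := hcommon hl
  rcases hPQ with ⟨rfl, rfl⟩ | ⟨rfl, rfl⟩
  · have hready := eq_level_zero_of_ready emb hPQ'.le le_rfl hrest
    obtain ⟨-, h₁, h₂⟩ := consec_three_of_sources DLEdge.s1u DLEdge.s1v DLEdge.s2v DLEdge.s2w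
      hual hval hvbe hwbe halε hbeε hv_out hw_out hPQ' (hrest _ (by simp) (by simp)) hready
      (by simp) (by simp) (by simp) hal_be hu_be
    exact .inr ⟨h₁, h₂⟩
  · -- the mirror image `s₂ s₁ u₀ v₀ w₀`, in which `al` and `be` exchange their roles
    have hready := eq_level_zero_of_ready emb le_rfl hPQ'.le fun x h₁ h₂ => hrest x h₂ h₁
    obtain ⟨-, h₁, h₂⟩ := consec_three_of_sources DLEdge.s2w DLEdge.s2v DLEdge.s1v DLEdge.s1u
      hwbe hvbe hval hual hbeε halε (fun x hx => (hv_out x hx).symm)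
      (fun x hx hne => absurd (hu_out x hx) hne) hPQ' (hrest _ (by simp) (by simp))
      (fun x hx => by rcases hready x hx with h | h | h <;> simp [h]) (by simp) (by simp)
      (by simp) hal_be.symm hal_w.symm
    exact .inl ⟨h₁, h₂⟩

theorem consec_next_of_uvw {i : ℕ} (hi : i < ℓ)
    (h₁ : emb.Consec (DLu ℓ i hi.le) (DLv ℓ i hi.le))
    (h₂ : emb.Consec (DLv ℓ i hi.le) (DLw ℓ i hi.le)) :
    emb.Consec (DLw ℓ i hi.le) (DLw ℓ (i + 1) hi) ∧
      emb.Consec (DLw ℓ (i + 1) hi) (DLv ℓ (i + 1) hi) ∧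
      emb.Consec (DLv ℓ (i + 1) hi) (DLu ℓ (i + 1) hi) := by
  obtain ⟨L, hL, hLu, hLv⟩ : ∃ L, DLEdge ℓ L (DLw ℓ i hi.le) ∧ L ≠ DLu ℓ i hi.le ∧
      L ≠ DLv ℓ i hi.le := by
    rcases i with _ | i
    · exact ⟨DLs2 ℓ, DLEdge.s2w, by simp, by simp⟩
    · exact ⟨_, DLEdge.ww (Nat.lt_of_succ_lt hi), by simp, by simp⟩
  have hLA := h₁.lt_pred (h₂.lt_pred (emb.topo hL) hLv) hLu
  have hu' := h₂.succ_lt (h₁.succ_lt (emb.topo (DLEdge.uu hi)) (by simp)) (by simp)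
  have hv' := h₂.succ_lt (emb.topo (DLEdge.vv hi)) (by simp)
  obtain ⟨al, be, hual, hval, hvbe, hwbe, -, hv_out, hw_out, -, hal_be, hu_be, -⟩ :=
    DLEdge.exists_out hi
  have hready := eq_succ_level_of_ready emb hi (h₁.1.trans h₂.1).le h₂.1.le le_rfl hu' hv'
    (emb.topo (DLEdge.ww hi))
  exact consec_three_of_parallel hL (DLEdge.uu hi) (DLEdge.vv hi) (DLEdge.ww hi) hual hval hvbe hwbe
    hv_out hw_out hLA h₁.1 h₂.1 hu' hv' hready (by simp) (by simp) (by simp) hal_be hu_be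

theorem consec_next_of_wvu {i : ℕ} (hi : i < ℓ)
    (h₁ : emb.Consec (DLw ℓ i hi.le) (DLv ℓ i hi.le))
    (h₂ : emb.Consec (DLv ℓ i hi.le) (DLu ℓ i hi.le)) :
    emb.Consec (DLu ℓ i hi.le) (DLu ℓ (i + 1) hi) ∧
      emb.Consec (DLu ℓ (i + 1) hi) (DLv ℓ (i + 1) hi) ∧
      emb.Consec (DLv ℓ (i + 1) hi) (DLw ℓ (i + 1) hi) := by
  obtain ⟨L, hL, hLw, hLv⟩ : ∃ L, DLEdge ℓ L (DLu ℓ i hi.le) ∧ L ≠ DLw ℓ i hi.le ∧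
      L ≠ DLv ℓ i hi.le := by
    rcases i with _ | i
    · exact ⟨DLs1 ℓ, DLEdge.s1u, by simp, by simp⟩
    · exact ⟨_, DLEdge.uu (Nat.lt_of_succ_lt hi), by simp, by simp⟩
  have hLA := h₁.lt_pred (h₂.lt_pred (emb.topo hL) hLv) hLw
  have hv' := h₂.succ_lt (emb.topo (DLEdge.vv hi)) (by simp)
  have hw' := h₂.succ_lt (h₁.succ_lt (emb.topo (DLEdge.ww hi)) (by simp)) (by simp)
  obtain ⟨al, be, hual, hval, hvbe, hwbe, hu_out, hv_out, -, -, hal_be, -, hal_w⟩ :=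
    DLEdge.exists_out hi
  have hready := eq_succ_level_of_ready emb hi le_rfl h₂.1.le (h₁.1.trans h₂.1).le
    (emb.topo (DLEdge.uu hi)) hv' hw'
  exact consec_three_of_zigzag hL (DLEdge.vu hi) (DLEdge.vv hi) (DLEdge.wv hi) (DLEdge.ww hi)
    hual hval hvbe hwbe hu_out hv_out hLA h₁.1 h₂.1 (emb.topo (DLEdge.uu hi)) hv' hw' hready
    (by simp) (by simp) (by simp) hal_be hal_w

theorem consec_uvw_or_wvu {i : ℕ} (hi : i < ℓ) :
    (emb.Consec (DLu ℓ i hi.le) (DLv ℓ i hi.le) ∧ emb.Consec (DLv ℓ i hi.le) (DLw ℓ i hi.le)) ∨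
      (emb.Consec (DLw ℓ i hi.le) (DLv ℓ i hi.le) ∧
        emb.Consec (DLv ℓ i hi.le) (DLu ℓ i hi.le)) := by
  induction i with
  | zero => exact consec_uvw_or_wvu_zero emb hi
  | succ i ih =>
    rcases ih (Nat.lt_of_succ_lt hi) with ⟨h₁, h₂⟩ | ⟨h₁, h₂⟩
    · exact .inr (consec_next_of_uvw emb (Nat.lt_of_succ_lt hi) h₁ h₂).2
    · exact .inl (consec_next_of_wvu emb (Nat.lt_of_succ_lt hi) h₁ h₂).2

theorem tripleBefore_of_le {i j : ℕ} (hi : i ≤ ℓ) (hj : j ≤ ℓ) (c : ℕ)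
    (hu : emb.pos (DLu ℓ i hi) ≤ c) (hv : emb.pos (DLv ℓ i hi) ≤ c)
    (hw : emb.pos (DLw ℓ i hi) ≤ c) (hu' : c < emb.pos (DLu ℓ j hj))
    (hv' : c < emb.pos (DLv ℓ j hj)) (hw' : c < emb.pos (DLw ℓ j hj)) : TripleBefore emb i j := by
  intro x y hx hy
  have hx' : emb.pos x ≤ c := by
    rcases hx with h | h | h
    · rwa [show x = DLu ℓ i hi from Subtype.ext h]
    · rwa [show x = DLv ℓ i hi from Subtype.ext h]
    · rwa [show x = DLw ℓ i hi from Subtype.ext h]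
  have hy' : c < emb.pos y := by
    rcases hy with h | h | h
    · rwa [show y = DLu ℓ j hj from Subtype.ext h]
    · rwa [show y = DLv ℓ j hj from Subtype.ext h]
    · rwa [show y = DLw ℓ j hj from Subtype.ext h]
  omega

end DoubleLadder

/-- in every 2-page book embedding of the double ladder of length
`ℓ`, for each `i < ℓ` the spine order contains one of the two patterns
`[… u_i v_i w_i … w_{i+1} v_{i+1} u_{i+1} …]` or
`[… w_i v_i u_i … u_{i+1} v_{i+1} w_{i+1} …]`,
each triple occupying three consecutive positions, with all of the `i`-th triple
preceding all of the `(i+1)`-th triple. -/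
theorem doubleLadder_pattern (ℓ : ℕ)
    (emb : TwoPageEmbedding (DLVert ℓ) (DLEdge ℓ)) :
    ∀ i : ℕ, ∀ h : i < ℓ,
      (emb.Consec (DLu ℓ i h.le) (DLv ℓ i h.le) ∧
       emb.Consec (DLv ℓ i h.le) (DLw ℓ i h.le) ∧
       emb.Consec (DLw ℓ (i + 1) h) (DLv ℓ (i + 1) h) ∧
       emb.Consec (DLv ℓ (i + 1) h) (DLu ℓ (i + 1) h) ∧
       TripleBefore emb i (i + 1)) ∨
      (emb.Consec (DLw ℓ i h.le) (DLv ℓ i h.le) ∧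
       emb.Consec (DLv ℓ i h.le) (DLu ℓ i h.le) ∧
       emb.Consec (DLu ℓ (i + 1) h) (DLv ℓ (i + 1) h) ∧
       emb.Consec (DLv ℓ (i + 1) h) (DLw ℓ (i + 1) h) ∧
       TripleBefore emb i (i + 1)) := by
  intro i h
  rcases DoubleLadder.consec_uvw_or_wvu emb h with ⟨h₁, h₂⟩ | ⟨h₁, h₂⟩
  · obtain ⟨h₃, h₄, h₅⟩ := DoubleLadder.consec_next_of_uvw emb h h₁ h₂
    exact .inl ⟨h₁, h₂, h₄, h₅, DoubleLadder.tripleBefore_of_le emb h.le h _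
      (h₁.1.trans h₂.1).le h₂.1.le le_rfl (h₃.1.trans (h₄.1.trans h₅.1)) (h₃.1.trans h₄.1) h₃.1⟩
  · obtain ⟨h₃, h₄, h₅⟩ := DoubleLadder.consec_next_of_wvu emb h h₁ h₂
    exact .inr ⟨h₁, h₂, h₄, h₅, DoubleLadder.tripleBefore_of_le emb h.le h _
      le_rfl h₂.1.le (h₁.1.trans h₂.1).le h₃.1 (h₃.1.trans h₄.1) (h₃.1.trans (h₄.1.trans h₅.1))⟩
end

section
/- In every 2-page book embedding of the double ladder of length ℓ, there is no index i ∈ {0,…,ℓ−1} such that both u_i < v_i < w_i and u_{i+1} < v_{i+1} < w_{i+1} hold in the spine order, and there is no index i ∈ {0,…,ℓ−1} such that both w_i < v_i < u_i and w_{i+1} < v_{i+1} < u_{i+1} hold in the spine order. -/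
/-!
Edges that cross on the spine must lie on different pages, so there is no odd cycle of
pairwise crossing edges. If two consecutive rungs of the ladder are both ordered
`u < v < w`, or both `w < v < u`, then comparing a vertex of one rung with a vertex of the
other always exposes three pairwise crossing edges or a crossing 5-cycle. Besides the
ladder edges between the two rungs these use a common predecessor of two vertices of
rung `i` and a common successor of two vertices of rung `i + 1`; at the ends of the ladder
these are the sources `s₁, s₂` and sinks `t₁, t₂`. Subscripts `₀` and `₁` below refer to
rungs `i` and `i + 1`.
-/

theorem Bool.false_of_three_cycle_ne {a b c : Bool} (hab : a ≠ b) (hbc : b ≠ c) (hca : c ≠ a) :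
    False := by
  revert hab hbc hca
  cases a <;> cases b <;> cases c <;> decide

theorem Bool.false_of_five_cycle_ne {a b c d e : Bool} (hab : a ≠ b) (hbc : b ≠ c) (hcd : c ≠ d)
    (hde : d ≠ e) (hea : e ≠ a) : False := by
  revert hab hbc hcd hde hea
  cases a <;> cases b <;> cases c <;> cases d <;> cases e <;> decide

namespace TwoPageEmbedding

variable {V : Type*} {E : V → V → Prop} (emb : TwoPageEmbedding V E)

theorem page_ne_of_interleave {a b c d : V} (hab : E a b) (hcd : E c d)
    (hac : emb.pos a < emb.pos c) (hcb : emb.pos c < emb.pos b) (hbd : emb.pos b < emb.pos d) :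
    emb.page a b ≠ emb.page c d :=
  fun hpage => emb.no_cross a b c d hab hcd hpage ⟨hac, hcb, hbd⟩

end TwoPageEmbedding

namespace DLEdge

theorem exists_common_pred_u_v {ℓ i : ℕ} (h : i ≤ ℓ) :
    ∃ p : DLVert ℓ, DLEdge ℓ p (DLu ℓ i h) ∧ DLEdge ℓ p (DLv ℓ i h) := by
  match i with
  | 0 => exact ⟨DLs1 ℓ, .s1u, .s1v⟩
  | k + 1 => exact ⟨DLv ℓ k (Nat.le_of_succ_le h), .vu h, .vv h⟩

theorem exists_common_pred_v_w {ℓ i : ℕ} (h : i ≤ ℓ) :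
    ∃ p : DLVert ℓ, DLEdge ℓ p (DLv ℓ i h) ∧ DLEdge ℓ p (DLw ℓ i h) := by
  match i with
  | 0 => exact ⟨DLs2 ℓ, .s2v, .s2w⟩
  | k + 1 => exact ⟨DLw ℓ k (Nat.le_of_succ_le h), .wv h, .ww h⟩

theorem exists_common_succ_u_v {ℓ i : ℕ} (h : i ≤ ℓ) :
    ∃ x : DLVert ℓ, DLEdge ℓ (DLu ℓ i h) x ∧ DLEdge ℓ (DLv ℓ i h) x := by
  rcases h.lt_or_eq with hlt | rfl
  · exact ⟨DLu ℓ (i + 1) hlt, .uu hlt, .vu hlt⟩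
  · exact ⟨DLt1 i, .ut1, .vt1⟩

theorem exists_common_succ_v_w {ℓ i : ℕ} (h : i ≤ ℓ) :
    ∃ z : DLVert ℓ, DLEdge ℓ (DLv ℓ i h) z ∧ DLEdge ℓ (DLw ℓ i h) z := by
  rcases h.lt_or_eq with hlt | rfl
  · exact ⟨DLv ℓ (i + 1) hlt, .vv hlt, .wv hlt⟩
  · exact ⟨DLt2 i, .vt2, .wt2⟩

end DLEdge

section ConsecutiveRungs

variable {ℓ i : ℕ} (emb : TwoPageEmbedding (DLVert ℓ) (DLEdge ℓ)) (h : i < ℓ)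

theorem not_rungs_ordered_u_v_w :
    ¬ (emb.pos (DLu ℓ i h.le) < emb.pos (DLv ℓ i h.le) ∧
       emb.pos (DLv ℓ i h.le) < emb.pos (DLw ℓ i h.le) ∧
       emb.pos (DLu ℓ (i + 1) h) < emb.pos (DLv ℓ (i + 1) h) ∧
       emb.pos (DLv ℓ (i + 1) h) < emb.pos (DLw ℓ (i + 1) h)) := by
  rintro ⟨hu₀v₀, hv₀w₀, hu₁v₁, hv₁w₁⟩
  have euu : DLEdge ℓ (DLu ℓ i h.le) (DLu ℓ (i + 1) h) := .uu h
  have evu : DLEdge ℓ (DLv ℓ i h.le) (DLu ℓ (i + 1) h) := .vu h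
  have evv : DLEdge ℓ (DLv ℓ i h.le) (DLv ℓ (i + 1) h) := .vv h
  have ewv : DLEdge ℓ (DLw ℓ i h.le) (DLv ℓ (i + 1) h) := .wv h
  have eww : DLEdge ℓ (DLw ℓ i h.le) (DLw ℓ (i + 1) h) := .ww h
  obtain ⟨p, epv, epw⟩ := DLEdge.exists_common_pred_v_w h.le
  obtain ⟨x, eux, evx⟩ := DLEdge.exists_common_succ_u_v h
  have hpv := emb.topo epv
  have hvx := emb.topo evx
  have hv₀u₁ := emb.topo evu
  have hw₀v₁ := emb.topo ewv
  have hne : emb.pos (DLu ℓ (i + 1) h) ≠ emb.pos (DLw ℓ i h.le) :=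
    emb.pos_inj.ne fun heq => nomatch congrArg Subtype.val heq
  rcases hne.lt_or_gt with hu₁w₀ | hw₀u₁
  · -- the edges `p w₀`, `v₀ v₁`, `u₁ x` pairwise cross
    exact Bool.false_of_three_cycle_ne
      (emb.page_ne_of_interleave epw evv hpv hv₀w₀ hw₀v₁)
      (emb.page_ne_of_interleave evv eux hv₀u₁ hu₁v₁ hvx)
      (emb.page_ne_of_interleave epw eux (hpv.trans hv₀u₁) hu₁w₀ (hw₀v₁.trans hvx)).symm
  · -- the edges `u₀ u₁`, `v₀ v₁`, `w₀ w₁` pairwise cross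
    exact Bool.false_of_three_cycle_ne
      (emb.page_ne_of_interleave euu evv hu₀v₀ hv₀u₁ hu₁v₁)
      (emb.page_ne_of_interleave evv eww hv₀w₀ hw₀v₁ hv₁w₁)
      (emb.page_ne_of_interleave euu eww (hu₀v₀.trans hv₀w₀) hw₀u₁ (hu₁v₁.trans hv₁w₁)).symm

theorem not_rungs_ordered_w_v_u :
    ¬ (emb.pos (DLw ℓ i h.le) < emb.pos (DLv ℓ i h.le) ∧
       emb.pos (DLv ℓ i h.le) < emb.pos (DLu ℓ i h.le) ∧
       emb.pos (DLw ℓ (i + 1) h) < emb.pos (DLv ℓ (i + 1) h) ∧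
       emb.pos (DLv ℓ (i + 1) h) < emb.pos (DLu ℓ (i + 1) h)) := by
  rintro ⟨hw₀v₀, hv₀u₀, hw₁v₁, hv₁u₁⟩
  have euu : DLEdge ℓ (DLu ℓ i h.le) (DLu ℓ (i + 1) h) := .uu h
  have evu : DLEdge ℓ (DLv ℓ i h.le) (DLu ℓ (i + 1) h) := .vu h
  have evv : DLEdge ℓ (DLv ℓ i h.le) (DLv ℓ (i + 1) h) := .vv h
  have ewv : DLEdge ℓ (DLw ℓ i h.le) (DLv ℓ (i + 1) h) := .wv h
  have eww : DLEdge ℓ (DLw ℓ i h.le) (DLw ℓ (i + 1) h) := .ww h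
  obtain ⟨p, epv, epw⟩ := DLEdge.exists_common_pred_v_w h.le
  obtain ⟨q, equ, eqv⟩ := DLEdge.exists_common_pred_u_v h.le
  obtain ⟨z, evz, ewz⟩ := DLEdge.exists_common_succ_v_w h
  have hpw := emb.topo epw
  have hqv := emb.topo eqv
  have hvz := emb.topo evz
  have hu₀u₁ := emb.topo euu
  have hv₀v₁ := emb.topo evv
  have hw₀w₁ := emb.topo eww
  have hne : emb.pos (DLu ℓ i h.le) ≠ emb.pos (DLv ℓ (i + 1) h) :=
    emb.pos_inj.ne fun heq => nomatch congrArg Subtype.val heq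
  rcases hne.lt_or_gt with hu₀v₁ | hv₁u₀
  · -- crossing 5-cycle `v₀ u₁`, `q u₀`, `v₀ v₁`, `u₀ u₁`, `w₀ v₁`
    exact Bool.false_of_five_cycle_ne
      (emb.page_ne_of_interleave equ evu hqv hv₀u₀ hu₀u₁).symm
      (emb.page_ne_of_interleave equ evv hqv hv₀u₀ hu₀v₁)
      (emb.page_ne_of_interleave evv euu hv₀u₀ hu₀v₁ hv₁u₁)
      (emb.page_ne_of_interleave ewv euu (hw₀v₀.trans hv₀u₀) hu₀v₁ hv₁u₁).symm
      (emb.page_ne_of_interleave ewv evu hw₀v₀ hv₀v₁ hv₁u₁)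
  have hne' : emb.pos (DLv ℓ i h.le) ≠ emb.pos (DLw ℓ (i + 1) h) :=
    emb.pos_inj.ne fun heq => nomatch congrArg Subtype.val heq
  rcases hne'.lt_or_gt with hv₀w₁ | hw₁v₀
  · -- crossing 5-cycle `w₀ v₁`, `p v₀`, `w₀ w₁`, `v₀ v₁`, `w₁ z`
    exact Bool.false_of_five_cycle_ne
      (emb.page_ne_of_interleave epv ewv hpw hw₀v₀ hv₀v₁).symm
      (emb.page_ne_of_interleave epv eww hpw hw₀v₀ hv₀w₁)
      (emb.page_ne_of_interleave eww evv hw₀v₀ hv₀w₁ hw₁v₁)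
      (emb.page_ne_of_interleave evv ewz hv₀w₁ hw₁v₁ hvz)
      (emb.page_ne_of_interleave ewv ewz hw₀w₁ hw₁v₁ hvz).symm
  · -- the edges `p v₀`, `w₀ v₁`, `w₁ z` pairwise cross
    exact Bool.false_of_three_cycle_ne
      (emb.page_ne_of_interleave epv ewv hpw hw₀v₀ hv₀v₁)
      (emb.page_ne_of_interleave ewv ewz hw₀w₁ hw₁v₁ hvz)
      (emb.page_ne_of_interleave epv ewz (hpw.trans hw₀w₁) hw₁v₀ (hv₀v₁.trans hvz)).symm

end ConsecutiveRungs

/-- in every 2-page book embedding of the double ladder of length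
`ℓ`, no index `i < ℓ` has both triples `i` and `i+1` ordered `u < v < w` in the
spine order, and no index `i < ℓ` has both triples ordered `w < v < u`. -/
theorem doubleLadder_no_repeated_orientation (ℓ : ℕ)
    (emb : TwoPageEmbedding (DLVert ℓ) (DLEdge ℓ)) :
    ∀ i : ℕ, ∀ h : i < ℓ,
      ¬ (emb.pos (DLu ℓ i h.le) < emb.pos (DLv ℓ i h.le) ∧
         emb.pos (DLv ℓ i h.le) < emb.pos (DLw ℓ i h.le) ∧
         emb.pos (DLu ℓ (i + 1) h) < emb.pos (DLv ℓ (i + 1) h) ∧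
         emb.pos (DLv ℓ (i + 1) h) < emb.pos (DLw ℓ (i + 1) h)) ∧
      ¬ (emb.pos (DLw ℓ i h.le) < emb.pos (DLv ℓ i h.le) ∧
         emb.pos (DLv ℓ i h.le) < emb.pos (DLu ℓ i h.le) ∧
         emb.pos (DLw ℓ (i + 1) h) < emb.pos (DLv ℓ (i + 1) h) ∧
         emb.pos (DLv ℓ (i + 1) h) < emb.pos (DLu ℓ (i + 1) h)) :=
  fun _ h => ⟨not_rungs_ordered_u_v_w emb h, not_rungs_ordered_w_v_u emb h⟩
end
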